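/- arXiv:1112.1471 — 5 statements merged into one kernel-verified Lean document; each statement's English description precedes it below -/
import Mathlib

section
/- Let φ : ℝᵐ → ℝᵐ be linear with m = n+1, and suppose |det φ| = m^{-m/2} ‖φ‖_{HS}^m with det φ ≥ 0. Then φ^T φ = (‖φ‖_{HS}²/m) · I, i.e. φ = λ O for λ = ‖φ‖_{HS}/√m and some orthogonal O with det O ≥ 0. -/
/-!
`φᵀ φ` is positive semidefinite with trace `‖φ‖_HS²` and determinant `(det φ)²`, so the hypothesis
says that the geometric mean of its eigenvalues equals their arithmetic mean. By the equality case
of AM–GM all eigenvalues equal `‖φ‖_HS² / m`, hence `φᵀ φ` is that scalar, and `φ` rescaled by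
`√m / ‖φ‖_HS` is orthogonal (when `φ ≠ 0`).
-/

open Matrix Finset
open scoped ComplexOrder

theorem Real.eq_mean_of_prod_eq_mean_pow {ι : Type*} [Fintype ι] [Nonempty ι] {z : ι → ℝ}
    (hz : ∀ i, 0 ≤ z i)
    (h : ∏ i, z i = ((∑ i, z i) / Fintype.card ι) ^ Fintype.card ι) (j : ι) :
    z j = (∑ i, z i) / Fintype.card ι := by
  have hcard : (Fintype.card ι : ℝ) ≠ 0 := by positivity
  have hmean : ∑ i, (Fintype.card ι : ℝ)⁻¹ * z i = (∑ i, z i) / Fintype.card ι := by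
    rw [← mul_sum, inv_mul_eq_div]
  have hgeom : ∏ i, z i ^ (Fintype.card ι : ℝ)⁻¹ = (∑ i, z i) / Fintype.card ι := by
    rw [Real.finsetProd_rpow _ _ (fun i _ => hz i), h, Real.pow_rpow_inv_natCast
      (div_nonneg (sum_nonneg fun i _ => hz i) (Nat.cast_nonneg _)) Fintype.card_ne_zero]
  have := (Real.geom_mean_eq_arith_mean_weighted_iff_of_pos' univ _ z
    (fun _ _ => by positivity) (by simp [hcard]) (fun i _ => hz i)).mp
    (hgeom.trans hmean.symm) j (mem_univ j)
  rwa [hmean] at this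

theorem Matrix.IsHermitian.eq_smul_one_of_eigenvalues_eq {𝕜 n : Type*} [RCLike 𝕜] [Fintype n]
    [DecidableEq n] {A : Matrix n n 𝕜} (hA : A.IsHermitian) {c : ℝ}
    (h : ∀ i, hA.eigenvalues i = c) : A = (c : 𝕜) • 1 := by
  have hdiag : diagonal (RCLike.ofReal ∘ hA.eigenvalues) = (c : 𝕜) • (1 : Matrix n n 𝕜) := by
    ext i j
    by_cases hij : i = j <;> simp [diagonal, hij, h]
  rw [hA.spectral_theorem, hdiag, map_smul, map_one]

theorem Matrix.trace_transpose_mul_self {m n R : Type*} [Fintype m] [Fintype n] [CommSemiring R]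
    (A : Matrix m n R) : (Aᵀ * A).trace = ∑ i, ∑ j, A i j ^ 2 := by
  simp only [trace, diag, mul_apply, transpose_apply, sq]
  exact sum_comm

theorem Matrix.PosSemidef.eq_smul_one_of_det_eq {𝕜 n : Type*} [RCLike 𝕜] [Fintype n]
    [DecidableEq n] [Nonempty n] {A : Matrix n n 𝕜} (hA : A.PosSemidef)
    (h : A.det = (A.trace / Fintype.card n) ^ Fintype.card n) :
    A = (A.trace / Fintype.card n) • 1 := by
  have hH := hA.isHermitian
  have hmean : (A.trace / Fintype.card n : 𝕜) =
      ((∑ i, hH.eigenvalues i) / Fintype.card n : ℝ) := by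
    rw [hH.trace_eq_sum_eigenvalues]; push_cast; rfl
  have hprod : ∏ i, hH.eigenvalues i =
      ((∑ i, hH.eigenvalues i) / Fintype.card n) ^ Fintype.card n := by
    apply RCLike.ofReal_injective (K := 𝕜)
    rw [RCLike.ofReal_prod, ← hH.det_eq_prod_eigenvalues, h, hmean, RCLike.ofReal_pow]
  rw [hmean]
  exact hH.eq_smul_one_of_eigenvalues_eq
    (Real.eq_mean_of_prod_eq_mean_pow hA.eigenvalues_nonneg hprod)

theorem Matrix.exists_mem_orthogonalGroup_of_transpose_mul_self_eq {n : Type*} [Fintype n]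
    [DecidableEq n] {A : Matrix n n ℝ} {r : ℝ} (hr : 0 ≤ r) (hA : Aᵀ * A = r ^ 2 • 1)
    (hdet : 0 ≤ A.det) : ∃ O ∈ orthogonalGroup n ℝ, 0 ≤ O.det ∧ A = r • O := by
  rcases hr.eq_or_lt with rfl | hr
  · have hA0 : A = 0 := by
      rw [← trace_conjTranspose_mul_self_eq_zero_iff, conjTranspose_eq_transpose_of_trivial, hA]
      simp
    exact ⟨1, one_mem _, by simp, by simp [hA0]⟩
  refine ⟨r⁻¹ • A, ?_, ?_, ?_⟩
  · rw [mem_orthogonalGroup_iff', transpose_smul, smul_mul_smul_comm, hA, smul_smul]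
    field_simp
    simp
  · rw [det_smul]
    positivity
  · rw [smul_smul, mul_inv_cancel₀ hr.ne', one_smul]

theorem Real.sq_natCast_rpow_neg_half_mul_sqrt_pow (m : ℕ) {T : ℝ} (hT : 0 ≤ T) :
    ((m : ℝ) ^ (-(m : ℝ) / 2) * √T ^ m) ^ 2 = (T / m) ^ m := by
  rw [mul_pow, ← Real.rpow_mul_natCast (Nat.cast_nonneg m), ← pow_mul, mul_comm m 2, pow_mul,
    Real.sq_sqrt hT, div_pow]
  push_cast
  rw [div_mul_cancel₀ _ two_ne_zero, Real.rpow_neg (Nat.cast_nonneg m), Real.rpow_natCast,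
    inv_mul_eq_div]

/-- equality case of the Hadamard-type inequality. If
`|det φ| = m^{-m/2} ‖φ‖_HS^m` (m = n+1) and `det φ ≥ 0`, then
`φᵀ φ = (‖φ‖_HS²/m)·I`, i.e. `φ = λ O` with `λ = ‖φ‖_HS/√m` and `O`
orthogonal with nonnegative determinant. -/
theorem stmt_4 (n : ℕ) (φ : Matrix (Fin (n+1)) (Fin (n+1)) ℝ)
    (hdet : 0 ≤ φ.det)
    (heq : |φ.det| = ((n+1 : ℝ)) ^ (-((n+1 : ℝ)) / 2) *
      (Real.sqrt (∑ i, ∑ j, φ i j ^ 2)) ^ (n+1)) :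
    φ.transpose * φ = ((∑ i, ∑ j, φ i j ^ 2) / (n+1 : ℝ)) • (1 : Matrix (Fin (n+1)) (Fin (n+1)) ℝ) ∧
    ∃ O : Matrix (Fin (n+1)) (Fin (n+1)) ℝ,
      O ∈ Matrix.orthogonalGroup (Fin (n+1)) ℝ ∧ 0 ≤ O.det ∧
      φ = (Real.sqrt (∑ i, ∑ j, φ i j ^ 2) / Real.sqrt (n+1 : ℝ)) • O := by
  set T := ∑ i, ∑ j, φ i j ^ 2
  have hT : 0 ≤ T := by positivity
  have htrace : (φᵀ * φ).trace = T := trace_transpose_mul_self φ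
  have hdet_gram : (φᵀ * φ).det =
      ((φᵀ * φ).trace / Fintype.card (Fin (n + 1))) ^ Fintype.card (Fin (n + 1)) := by
    rw [det_mul, det_transpose, ← sq, ← abs_of_nonneg hdet, heq, htrace, Fintype.card_fin]
    exact_mod_cast Real.sq_natCast_rpow_neg_half_mul_sqrt_pow (n + 1) hT
  have hgram : φᵀ * φ = (T / (n + 1 : ℝ)) • 1 := by
    have hpsd := posSemidef_conjTranspose_mul_self φ
    rw [conjTranspose_eq_transpose_of_trivial] at hpsd
    simpa [htrace] using hpsd.eq_smul_one_of_det_eq hdet_gram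
  refine ⟨hgram, exists_mem_orthogonalGroup_of_transpose_mul_self_eq (by positivity) ?_ hdet⟩
  rw [hgram, div_pow, Real.sq_sqrt hT, Real.sq_sqrt (by positivity)]
end

section
/- Let (M,g) be a Riemannian manifold with an n-compatible triad, so that the (n+1)-form ω is a calibration (comass ≤ 1 and equality characterized by J), and let u : X → M be a smooth map from an oriented Riemannian (n+1)-manifold. Then pointwise u*ω(e₀ ∧ ... ∧ eₙ) ≤ (n+1)^{-(n+1)/2} |du|^{n+1} for any oriented orthonormal frame (e₀,...,eₙ) of T_xX, where |du| is the Hilbert–Schmidt norm of du. In particular E_{n+1}(u) := (n+1)^{-(n+1)/2} ∫_X |du|^{n+1} dVol_X ≥ ∫_X u*ω. -/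
/-!
Write `A i = φ (e i)`. The calibration form is `ω A = ⟪A 0, J (A 1, …, A n)⟫` with
`‖J (A 1, …, A n)‖²` the Gram determinant of `A 1, …, A n`, so Cauchy–Schwarz and
Hadamard's inequality (Gram determinant ≤ product of squared norms, seen by Gram–Schmidt) give
`ω A ≤ ∏ ‖A i‖`. AM-GM applied to the `‖A i‖²` bounds this product by
`((∑ ‖A i‖²) / (n+1)) ^ ((n+1)/2)`.
-/

open Matrix Module Submodule InnerProductSpace Set

theorem det_gram_le_prod_norm_sq {E ι : Type*} [NormedAddCommGroup E] [InnerProductSpace ℝ E]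
    [Fintype ι] [LinearOrder ι] [LocallyFiniteOrderBot ι] (v : ι → E) :
    (gram ℝ v).det ≤ ∏ i, ‖v i‖ ^ 2 := by
  by_cases hv : LinearIndependent ℝ v
  swap
  · rw [← det_gram_ne_zero_iff_linearIndependent, not_not] at hv
    rw [hv]
    positivity
  have _ := FiniteDimensional.span_of_finite ℝ (finite_range v)
  let w : ι → span ℝ (range v) := fun i => ⟨v i, subset_span ⟨i, rfl⟩⟩
  have hdim : finrank ℝ (span ℝ (range v)) = Fintype.card ι := finrank_span_eq_card hv
  let b := gramSchmidtOrthonormalBasis hdim w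
  have hgram : gram ℝ v = (b.toBasis.toMatrix w)ᵀ * b.toBasis.toMatrix w :=
    gram_eq_conjTranspose_mul b w
  have hdiag (i : ι) : ⟪b i, w i⟫_ℝ ^ 2 ≤ ‖v i‖ ^ 2 := by
    have := abs_real_inner_le_norm (b i) (w i)
    rw [b.orthonormal.1 i, one_mul] at this
    exact sq_le_sq' (abs_le.mp this).1 (abs_le.mp this).2
  rw [hgram, det_mul, det_transpose, ← Basis.det_apply, ← sq, gramSchmidtOrthonormalBasis_det,
    ← Finset.prod_pow]
  exact Finset.prod_le_prod (fun i _ => sq_nonneg _) (fun i _ => hdiag i)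

theorem prod_le_sum_div_card_pow {ι : Type*} [Fintype ι] [Nonempty ι] (y : ι → ℝ)
    (hy : ∀ i, 0 ≤ y i) :
    ∏ i, y i ≤ ((∑ i, y i) / Fintype.card ι) ^ Fintype.card ι := by
  have hprod : 0 ≤ ∏ i, y i := Finset.prod_nonneg fun i _ => hy i
  have amgm := Real.geom_mean_le_arith_mean Finset.univ (fun _ => 1) y (fun _ _ => zero_le_one)
    (by simp [Fintype.card_pos]) (fun i _ => hy i)
  simp only [Real.rpow_one, one_mul, Finset.sum_const, Finset.card_univ, nsmul_eq_mul,
    mul_one] at amgm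
  calc ∏ i, y i = ((∏ i, y i) ^ ((Fintype.card ι : ℝ)⁻¹)) ^ Fintype.card ι :=
        (Real.rpow_inv_natCast_pow hprod Fintype.card_ne_zero).symm
    _ ≤ _ := by gcongr

theorem prod_le_card_rpow_mul_sqrt_sum_sq_pow {ι : Type*} [Fintype ι] (x : ι → ℝ)
    (hx : ∀ i, 0 ≤ x i) :
    ∏ i, x i ≤ (Fintype.card ι : ℝ) ^ (-(Fintype.card ι : ℝ) / 2) *
      √(∑ i, x i ^ 2) ^ Fintype.card ι := by
  rcases isEmpty_or_nonempty ι with hι | hι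
  · simp
  set N := Fintype.card ι
  have hN : (0 : ℝ) < N := Nat.cast_pos.mpr Fintype.card_pos
  have hsq : (∏ i, x i) ^ 2 ≤ (√((∑ i, x i ^ 2) / N) ^ N) ^ 2 := by
    rw [← pow_mul, mul_comm, pow_mul, Real.sq_sqrt (by positivity), ← Finset.prod_pow]
    exact prod_le_sum_div_card_pow _ fun i => sq_nonneg _
  have hpow : (N : ℝ) ^ (-(N : ℝ) / 2) = (√N ^ N)⁻¹ := by
    rw [Real.sqrt_eq_rpow, ← Real.rpow_natCast, ← Real.rpow_mul hN.le, neg_div,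
      Real.rpow_neg hN.le]
    ring_nf
  calc ∏ i, x i ≤ √((∑ i, x i ^ 2) / N) ^ N :=
        (pow_le_pow_iff_left₀ (Finset.prod_nonneg fun i _ => hx i) (by positivity)
          two_ne_zero).mp hsq
    _ = _ := by rw [hpow, Real.sqrt_div' _ hN.le, div_pow, inv_mul_eq_div]

theorem norm_le_prod_norm_of_sq_eq_det_gram {E ι : Type*} [NormedAddCommGroup E]
    [InnerProductSpace ℝ E] [Fintype ι] [LinearOrder ι] [LocallyFiniteOrderBot ι]
    {x : E} {v : ι → E} (hx : ‖x‖ ^ 2 = (gram ℝ v).det) :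
    ‖x‖ ≤ ∏ i, ‖v i‖ := by
  refine (pow_le_pow_iff_left₀ (norm_nonneg x) (by positivity) two_ne_zero).mp ?_
  rw [hx, ← Finset.prod_pow]
  exact det_gram_le_prod_norm_sq v

/-- `φ` plays the role of `du_x` and `e` of an oriented orthonormal frame of `T_xX`. -/
theorem stmt_5_general {V W : Type*}
    [NormedAddCommGroup V] [InnerProductSpace ℝ V]
    [NormedAddCommGroup W] [InnerProductSpace ℝ W]
    (n : ℕ)
    (J : (Fin n → W) → W) (ω : W [⋀^Fin (n+1)]→ₗ[ℝ] ℝ)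
    (hω : ∀ A : Fin (n+1) → W,
      (inner ℝ (A 0) (J (fun i : Fin n => A i.succ)) : ℝ) = ω A)
    (hcomass : ∀ A : Fin n → W,
      ‖J A‖ ^ 2 = (Matrix.of fun i j : Fin n => (inner ℝ (A i) (A j) : ℝ)).det)
    (φ : V →ₗ[ℝ] W) (e : OrthonormalBasis (Fin (n+1)) ℝ V) :
    ω (fun i => φ (e i)) ≤
      ((n+1 : ℝ)) ^ (-((n+1 : ℝ)) / 2) *
        (Real.sqrt (∑ i, ‖φ (e i)‖ ^ 2)) ^ (n+1) := by
  set A : Fin (n + 1) → W := fun i => φ (e i)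
  calc ω A = ⟪A 0, J fun i => A i.succ⟫_ℝ := (hω A).symm
    _ ≤ ‖A 0‖ * ‖J fun i => A i.succ‖ := real_inner_le_norm _ _
    _ ≤ ‖A 0‖ * ∏ i : Fin n, ‖A i.succ‖ := by
      gcongr
      exact norm_le_prod_norm_of_sq_eq_det_gram (hcomass _)
    _ = ∏ i, ‖A i‖ := (Fin.prod_univ_succ fun i => ‖A i‖).symm
    _ ≤ _ := by
      simpa using prod_le_card_rpow_mul_sqrt_sum_sq_pow (‖A ·‖) fun i => norm_nonneg _

/-- pointwise form, as a statement about the differential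
`φ = du_x` at a point: if `ω` is the calibration `(n+1)`-form of a
compatible `n`-triad on `W` (given by a comass-one vector cross product `J`),
`φ : V → W` is linear (the differential of `u` at `x`) and `(e₀,...,eₙ)` is
an orthonormal frame of `V = T_xX`, then
`u*ω(e₀ ∧ ... ∧ eₙ) = ω(φe₀,...,φeₙ) ≤ (n+1)^{-(n+1)/2} |φ|^{n+1}`,
where `|φ|` is the Hilbert–Schmidt norm `√(∑ ‖φ(eᵢ)‖²)`.  Integrating this
pointwise bound over `X` gives `E_{n+1}(u) ≥ ∫_X u*ω`. -/
theorem stmt_5 {V W : Type*}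
    [NormedAddCommGroup V] [InnerProductSpace ℝ V] [FiniteDimensional ℝ V]
    [NormedAddCommGroup W] [InnerProductSpace ℝ W] [FiniteDimensional ℝ W]
    (n : ℕ)
    (J : (Fin n → W) → W) (ω : W [⋀^Fin (n+1)]→ₗ[ℝ] ℝ)
    (hω : ∀ A : Fin (n+1) → W,
      (inner ℝ (A 0) (J (fun i : Fin n => A i.succ)) : ℝ) = ω A)
    (hcomass : ∀ A : Fin n → W,
      ‖J A‖ ^ 2 = (Matrix.of fun i j : Fin n => (inner ℝ (A i) (A j) : ℝ)).det)
    (φ : V →ₗ[ℝ] W) (e : OrthonormalBasis (Fin (n+1)) ℝ V) :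
    ω (fun i => φ (e i)) ≤
      ((n+1 : ℝ)) ^ (-((n+1 : ℝ)) / 2) *
        (Real.sqrt (∑ i, ‖φ (e i)‖ ^ 2)) ^ (n+1) :=
  stmt_5_general n J ω hω hcomass φ e
end

section
/- Linear model of Lemma (Ortholem): Let V, W be real inner product spaces with dim V = n+1, let J : Λⁿ W → W be a vector cross product on W, and let φ : V → W be linear. Suppose φ satisfies the linear multi-Cauchy–Riemann equation: for every orthonormal positively-oriented basis (e₀,...,eₙ) of V and each i, λ^{n-1} φ(eᵢ) = (-1)^{n(n-i)} J(φ(e_{i+1}) ∧ ... ∧ φ(e_{i-1})) (indices mod n+1), where λ = (n+1)^{-1/2} ‖φ‖_{HS}. If λ > 0, then the vectors (λ^{-1} φ(e₀), ..., λ^{-1} φ(eₙ)) form an orthonormal (n+1)-frame in W. -/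
/-!
Pairing `λⁿ⁻¹ φ(eᵢ) = ± J(φ(e_{i+1}), …, φ(e_{i-1}))` with `φ(e_k)`, `k ≠ i`, evaluates `ω` on a
tuple with a repeated entry, so the `φ(eᵢ)` are pairwise orthogonal. The Gram matrices of their n-tuples are then
diagonal, and the comass identity gives `λ²⁽ⁿ⁻¹⁾ ‖φ(eᵢ)‖⁴ = ∏ₘ ‖φ(eₘ)‖²`, which does not depend on
`i`. Hence all `‖φ(eᵢ)‖` agree, and the normalisation of `λ` by the Hilbert–Schmidt norm forces
their common value to be `λ`.
-/

open Matrix in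
theorem Matrix.det_gram_of_pairwise_inner_eq_zero {𝕜 E ι : Type*} [RCLike 𝕜]
    [NormedAddCommGroup E] [InnerProductSpace 𝕜 E] [Fintype ι] [DecidableEq ι] {v : ι → E}
    (hv : Pairwise fun i j => inner 𝕜 (v i) (v j) = 0) :
    (gram 𝕜 v).det = ∏ i, (‖v i‖ ^ 2 : 𝕜) := by
  have : gram 𝕜 v = diagonal fun i => (‖v i‖ ^ 2 : 𝕜) := by
    ext i j
    rcases eq_or_ne i j with rfl | hij
    · simp [gram_apply, inner_self_eq_norm_sq_to_K]
    · simp [gram_apply, hv hij, hij]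
  rw [this, det_diagonal]

section CrossProduct

variable {W : Type*} [NormedAddCommGroup W] [InnerProductSpace ℝ W] {n : ℕ}

theorem inner_cross_rotate_eq_zero {J : (Fin n → W) → W} {ω : W [⋀^Fin (n + 1)]→ₗ[ℝ] ℝ}
    (hω : ∀ A : Fin (n + 1) → W, inner ℝ (A 0) (J fun i : Fin n => A i.succ) = ω A)
    (v : Fin (n + 1) → W) {i k : Fin (n + 1)} (hki : k ≠ i) :
    inner ℝ (v k) (J fun j : Fin n => v (i + j.succ)) = 0 := by
  have hne : k - i ≠ 0 := sub_ne_zero_of_ne hki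
  set A : Fin (n + 1) → W := Function.update (fun m => v (i + m)) 0 (v k)
  have hA : (fun j : Fin n => A j.succ) = fun j => v (i + j.succ) := by
    funext j; simp [A, Fin.succ_ne_zero]
  have hrep : A (k - i) = A 0 := by simp [A, hne]
  rw [← hA, show v k = A 0 by simp [A], hω, ω.map_eq_zero_of_eq A hrep hne]

theorem inner_eq_zero_of_smul_eq_cross {J : (Fin n → W) → W} {ω : W [⋀^Fin (n + 1)]→ₗ[ℝ] ℝ}
    (hω : ∀ A : Fin (n + 1) → W, inner ℝ (A 0) (J fun i : Fin n => A i.succ) = ω A)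
    {v : Fin (n + 1) → W} {c : ℝ} {s : Fin (n + 1) → ℝ} (hc : c ≠ 0)
    (hv : ∀ i, c • v i = s i • J fun j : Fin n => v (i + j.succ)) :
    Pairwise fun k i => inner ℝ (v k) (v i) = 0 := by
  intro k i hki
  have h := congrArg (inner ℝ (v k)) (hv i)
  rw [real_inner_smul_right, real_inner_smul_right, inner_cross_rotate_eq_zero hω v hki,
    mul_zero] at h
  exact (mul_eq_zero.mp h).resolve_left hc


theorem sq_mul_norm_sq_eq_prod_of_smul_eq_cross {J : (Fin n → W) → W}
    (hcomass : ∀ A : Fin n → W,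
      ‖J A‖ ^ 2 = (Matrix.of fun i j : Fin n => inner ℝ (A i) (A j)).det)
    {v : Fin (n + 1) → W} {c : ℝ} {s : Fin (n + 1) → ℝ} (hs : ∀ i, |s i| = 1)
    (hv : ∀ i, c • v i = s i • J fun j : Fin n => v (i + j.succ))
    (horth : Pairwise fun k i => inner ℝ (v k) (v i) = 0) (i : Fin (n + 1)) :
    c ^ 2 * ‖v i‖ ^ 2 = ∏ j : Fin n, ‖v (i + j.succ)‖ ^ 2 := by
  have horth' : Pairwise fun j j' : Fin n => inner ℝ (v (i + j.succ)) (v (i + j'.succ)) = 0 :=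
    fun j j' hj => horth (by simpa using hj)
  have hnorm := congrArg (‖·‖ ^ 2) (hv i)
  simp only [norm_smul, Real.norm_eq_abs, hs, one_mul] at hnorm
  rw [← sq_abs c, ← mul_pow, hnorm, hcomass]
  exact Matrix.det_gram_of_pairwise_inner_eq_zero horth'

theorem norm_eq_of_smul_eq_cross {J : (Fin n → W) → W}
    (hcomass : ∀ A : Fin n → W,
      ‖J A‖ ^ 2 = (Matrix.of fun i j : Fin n => inner ℝ (A i) (A j)).det)
    {v : Fin (n + 1) → W} {c : ℝ} {s : Fin (n + 1) → ℝ} (hc : c ≠ 0) (hs : ∀ i, |s i| = 1)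
    (hv : ∀ i, c • v i = s i • J fun j : Fin n => v (i + j.succ))
    (horth : Pairwise fun k i => inner ℝ (v k) (v i) = 0) (i k : Fin (n + 1)) :
    ‖v i‖ = ‖v k‖ := by
  have key : ∀ i, c ^ 2 * ‖v i‖ ^ 4 = ∏ m, ‖v m‖ ^ 2 := fun i => by
    rw [← Equiv.prod_comp (Equiv.addLeft i), Fin.prod_univ_succ]
    simp only [Equiv.coe_addLeft, add_zero,
      ← sq_mul_norm_sq_eq_prod_of_smul_eq_cross hcomass hs hv horth i]
    ring
  have h4 := mul_left_cancel₀ (pow_ne_zero 2 hc) ((key i).trans (key k).symm)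
  exact (pow_left_inj₀ (norm_nonneg _) (norm_nonneg _) (by norm_num)).mp h4

end CrossProduct

theorem orthonormal_inv_smul_of_pairwise_inner_eq_zero {𝕜 E ι : Type*} [RCLike 𝕜]
    [NormedAddCommGroup E] [InnerProductSpace 𝕜 E] {v : ι → E} {r : ℝ}
    (hv : Pairwise fun i j => inner 𝕜 (v i) (v j) = 0) (hnorm : ∀ i, ‖v i‖ = r) (hr : 0 < r) :
    Orthonormal 𝕜 fun i => (r⁻¹ : 𝕜) • v i := by
  refine ⟨fun i => ?_, fun i j hij => ?_⟩
  · rw [norm_smul, hnorm, norm_inv, RCLike.norm_ofReal, abs_of_pos hr, inv_mul_cancel₀ hr.ne']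
  · simp [inner_smul_left, inner_smul_right, hv hij]

theorem rpow_neg_half_mul_sqrt_sum_norm_sq_of_norm_eq {E : Type*} [NormedAddCommGroup E]
    {m : ℕ} (hm : m ≠ 0) {v : Fin m → E} {r : ℝ} (hnorm : ∀ i, ‖v i‖ = r) (hr : 0 ≤ r) :
    (m : ℝ) ^ (-(1 : ℝ) / 2) * √(∑ i, ‖v i‖ ^ 2) = r := by
  have hm' : (0 : ℝ) < m := by positivity
  simp only [hnorm, Finset.sum_const, Finset.card_univ, Fintype.card_fin, nsmul_eq_mul]
  rw [Real.sqrt_mul hm'.le, Real.sqrt_sq hr, Real.sqrt_eq_rpow, ← mul_assoc,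
    ← Real.rpow_add hm']
  norm_num

theorem stmt_6_general {V W : Type*}
    [NormedAddCommGroup V] [InnerProductSpace ℝ V]
    [NormedAddCommGroup W] [InnerProductSpace ℝ W]
    (n : ℕ)
    (o : Orientation ℝ V (Fin (n+1)))
    (J : (Fin n → W) → W) (ω : W [⋀^Fin (n+1)]→ₗ[ℝ] ℝ)
    (hω : ∀ A : Fin (n+1) → W,
      (inner ℝ (A 0) (J (fun i : Fin n => A i.succ)) : ℝ) = ω A)
    (hcomass : ∀ A : Fin n → W,
      ‖J A‖ ^ 2 = (Matrix.of fun i j : Fin n => (inner ℝ (A i) (A j) : ℝ)).det)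
    (φ : V →ₗ[ℝ] W)
    (lam : ℝ)
    (hlam : ∀ e : OrthonormalBasis (Fin (n+1)) ℝ V,
      lam = ((n+1 : ℝ)) ^ (-(1:ℝ)/2) * Real.sqrt (∑ i, ‖φ (e i)‖ ^ 2))
    (hMCR : ∀ e : OrthonormalBasis (Fin (n+1)) ℝ V,
      e.toBasis.orientation = o →
      ∀ i : Fin (n+1),
        lam ^ (n-1) • φ (e i) =
          ((-1 : ℝ)) ^ (n * (n - (i : ℕ))) •
            J (fun j : Fin n => φ (e (i + j.succ))))
    (hpos : 0 < lam) :
    ∀ e : OrthonormalBasis (Fin (n+1)) ℝ V, e.toBasis.orientation = o →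
      Orthonormal ℝ (fun i : Fin (n+1) => lam⁻¹ • φ (e i)) := by
  intro e he
  have hc : lam ^ (n - 1) ≠ 0 := by positivity
  have hs : ∀ i : Fin (n + 1), |(-1 : ℝ) ^ (n * (n - (i : ℕ)))| = 1 := by simp
  have horth := inner_eq_zero_of_smul_eq_cross hω hc (hMCR e he)
  have hconst := norm_eq_of_smul_eq_cross hcomass hc hs (hMCR e he) horth
  have hlam_eq : lam = ‖φ (e 0)‖ := by
    have := rpow_neg_half_mul_sqrt_sum_norm_sq_of_norm_eq n.succ_ne_zero (hconst · 0)
      (norm_nonneg _)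
    push_cast at this
    rw [hlam e, this]
  exact orthonormal_inv_smul_of_pairwise_inner_eq_zero horth (hlam_eq ▸ (hconst · 0)) hpos

/-- linear model of the orthonormality lemma: let `V`, `W` be
real inner product spaces, `dim V = n+1`, `V` oriented, `J` a vector cross
product on `W` (alternating form `ω` plus comass one, with `Λⁿ` encoded by
tuples and Gram determinants), and `φ : V → W` linear.  If for every
positively-oriented orthonormal basis `(e₀,...,eₙ)` of `V` and each `i`,
`λ^{n-1} φ(eᵢ) = (-1)^{n(n-i)} J(φ(e_{i+1}) ∧ ... ∧ φ(e_{i-1}))` (indices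
mod `n+1`), where `λ = (n+1)^{-1/2}‖φ‖_HS`, and `λ > 0`, then
`(λ⁻¹φ(e₀),...,λ⁻¹φ(eₙ))` is an orthonormal frame in `W`. -/
theorem stmt_6 {V W : Type*}
    [NormedAddCommGroup V] [InnerProductSpace ℝ V] [FiniteDimensional ℝ V]
    [NormedAddCommGroup W] [InnerProductSpace ℝ W]
    (n : ℕ) (hdim : Module.finrank ℝ V = n + 1)
    (o : Orientation ℝ V (Fin (n+1)))
    (J : (Fin n → W) → W) (ω : W [⋀^Fin (n+1)]→ₗ[ℝ] ℝ)
    (hω : ∀ A : Fin (n+1) → W,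
      (inner ℝ (A 0) (J (fun i : Fin n => A i.succ)) : ℝ) = ω A)
    (hcomass : ∀ A : Fin n → W,
      ‖J A‖ ^ 2 = (Matrix.of fun i j : Fin n => (inner ℝ (A i) (A j) : ℝ)).det)
    (φ : V →ₗ[ℝ] W)
    (lam : ℝ)
    (hlam : ∀ e : OrthonormalBasis (Fin (n+1)) ℝ V,
      lam = ((n+1 : ℝ)) ^ (-(1:ℝ)/2) * Real.sqrt (∑ i, ‖φ (e i)‖ ^ 2))
    (hMCR : ∀ e : OrthonormalBasis (Fin (n+1)) ℝ V,
      e.toBasis.orientation = o →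
      ∀ i : Fin (n+1),
        lam ^ (n-1) • φ (e i) =
          ((-1 : ℝ)) ^ (n * (n - (i : ℕ))) •
            J (fun j : Fin n => φ (e (i + j.succ))))
    (hpos : 0 < lam) :
    ∀ e : OrthonormalBasis (Fin (n+1)) ℝ V, e.toBasis.orientation = o →
      Orthonormal ℝ (fun i : Fin (n+1) => lam⁻¹ • φ (e i)) :=
  stmt_6_general n o J ω hω hcomass φ lam hlam hMCR hpos
end

section
/- Any multiholomorphic map is weakly conformal: if u : X → M is a differentiable map between Riemannian manifolds where dim X = n+1, X carries its conformal n-triad and M a compatible n-triad, and u satisfies ð u = 0, then u*g = (n+1)^{-1} |du|² g_X pointwise. -/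
/-!
Fix an oriented orthonormal basis `f` and put `c = (n+1)^{-1/2} |φ|`. Pairing the `i`-th
multi-Cauchy–Riemann equation `c^{n-1} φ(fᵢ) = ± J(φ f_{i+1}, …, φ f_{i+n})` with `φ(fⱼ)` and
using `⟨a, J b⟩ = ω(a, b)` gives `0` for `j ≠ i`, because `ω` is alternating, and the same
number `± ω(φ ∘ f)` for every `j = i`, because the cyclic rotation by `i` has sign `(-1)^{n i}`.
So `φ ∘ f` is orthogonal with all lengths equal (when `c = 0` it vanishes), i.e. `φ` is
conformal; the conformal factor is then `|φ|²/(n+1)` computed in any orthonormal basis.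
-/

open scoped RealInnerProductSpace

open Fin.NatCast Fin.CommRing in
theorem finRotate_pow_apply (n m : ℕ) (k : Fin (n+1)) :
    (finRotate (n+1) ^ m) k = k + m := by
  induction m generalizing k with
  | zero => simp
  | succ m ih =>
      rw [pow_succ, Equiv.Perm.mul_apply, finRotate_apply, ih]
      push_cast
      ring

section CrossProduct

variable {W : Type*} [NormedAddCommGroup W] [InnerProductSpace ℝ W] {n : ℕ}
  {J : (Fin n → W) → W} {ω : W [⋀^Fin (n+1)]→ₗ[ℝ] ℝ}

theorem inner_cross_rotate_self
    (hω : ∀ A : Fin (n+1) → W, ⟪A 0, J (fun i : Fin n => A i.succ)⟫ = ω A)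
    (A : Fin (n+1) → W) (i : Fin (n+1)) :
    ⟪A i, J (fun j : Fin n => A (i + j.succ))⟫ = (-1) ^ (n * i) * ω A := by
  have hrot : (fun k => A (i + k)) = A ∘ ⇑(finRotate (n+1) ^ (i : ℕ)) := by
    funext k
    simp only [Function.comp_apply, finRotate_pow_apply, Fin.cast_val_eq_self, add_comm]
  have hsign : Equiv.Perm.sign (finRotate (n+1) ^ (i : ℕ)) = (-1) ^ (n * i) := by
    rw [map_pow, sign_finRotate, ← pow_mul, Nat.add_sub_cancel]
  have hpair := hω fun k => A (i + k)
  rw [add_zero] at hpair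
  rw [hpair, hrot, AlternatingMap.map_perm, hsign, Units.smul_def]
  push_cast
  simp

theorem inner_cross_rotate_of_ne
    (hω : ∀ A : Fin (n+1) → W, ⟪A 0, J (fun i : Fin n => A i.succ)⟫ = ω A)
    (A : Fin (n+1) → W) {i j : Fin (n+1)} (hji : j ≠ i) :
    ⟪A j, J (fun l : Fin n => A (i + l.succ))⟫ = 0 := by
  obtain ⟨m, hm⟩ : ∃ m : Fin n, j - i = m.succ :=
    Fin.eq_succ_of_ne_zero (sub_ne_zero.mpr hji)
  have hj : i + m.succ = j := by rw [← hm]; abel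
  -- `A j` is put in front of the rotated family, which already contains it in slot `m.succ`
  have hpair := hω (Function.update (fun k => A (i + k)) 0 (A j))
  simp only [Function.update_self, ne_eq, Fin.succ_ne_zero, not_false_eq_true,
    Function.update_of_ne] at hpair
  rw [hpair]
  refine ω.map_eq_zero_of_eq _ (i := 0) (j := m.succ) ?_ (Fin.succ_ne_zero m).symm
  simp [hj]

end CrossProduct

section Conformal

variable {ι V W : Type*} [Fintype ι] [NormedAddCommGroup V] [InnerProductSpace ℝ V]
  [NormedAddCommGroup W] [InnerProductSpace ℝ W]

theorem inner_map_map_of_orthonormalBasis {φ : V →ₗ[ℝ] W} {c : ℝ} (e : OrthonormalBasis ι ℝ V)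
    (h : ∀ i j, ⟪φ (e i), φ (e j)⟫ = c * ⟪e i, e j⟫) (v w : V) :
    ⟪φ v, φ w⟫ = c * ⟪v, w⟫ := by
  have : (innerₗ W).compl₁₂ φ φ = c • innerₗ V :=
    LinearMap.ext_basis e.toBasis e.toBasis (by simpa using h)
  simpa using LinearMap.congr_fun₂ this v w

theorem sum_norm_sq_map_of_inner_map_map {φ : V →ₗ[ℝ] W} {c : ℝ}
    (h : ∀ v w, ⟪φ v, φ w⟫ = c * ⟪v, w⟫) (e : OrthonormalBasis ι ℝ V) :
    ∑ k, ‖φ (e k)‖ ^ 2 = Fintype.card ι * c := by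
  have hk : ∀ k, ‖φ (e k)‖ ^ 2 = c := fun k => by
    rw [← real_inner_self_eq_norm_sq, h, real_inner_self_eq_norm_sq, e.orthonormal.1 k, one_pow,
      mul_one]
  simp [hk]

theorem inner_eq_of_mul_inner_eq_ite [DecidableEq ι] {b : ι → W} {t κ : ℝ}
    (h : ∀ i j, t * ⟪b i, b j⟫ = if i = j then κ else 0)
    (ht : t = 0 → ∑ k, ‖b k‖ ^ 2 = 0) (i j : ι) :
    ⟪b i, b j⟫ = (∑ k, ‖b k‖ ^ 2) / Fintype.card ι * if i = j then 1 else 0 := by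
  by_cases ht0 : t = 0
  · have hb : ∀ k, b k = 0 := fun k => by
      simpa using (Finset.sum_eq_zero_iff_of_nonneg (fun k _ => sq_nonneg ‖b k‖)).mp
        (ht ht0) k (Finset.mem_univ k)
    simp [hb]
  · have hdiag : ∀ k, ‖b k‖ ^ 2 = κ / t := fun k => by
      rw [eq_div_iff ht0, ← real_inner_self_eq_norm_sq, mul_comm, h, if_pos rfl]
    have hne : (Fintype.card ι : ℝ) ≠ 0 := by
      have : Nonempty ι := ⟨i⟩
      positivity
    rw [Finset.sum_congr rfl fun k _ => hdiag k, Finset.sum_const, Finset.card_univ,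
      nsmul_eq_mul, mul_div_cancel_left₀ _ hne, div_mul_eq_mul_div, eq_div_iff ht0, mul_comm _ t,
      h, mul_ite, mul_one, mul_zero]

end Conformal

theorem stmt_8_general {V W : Type*}
    [NormedAddCommGroup V] [InnerProductSpace ℝ V] [FiniteDimensional ℝ V]
    [NormedAddCommGroup W] [InnerProductSpace ℝ W]
    (n : ℕ) (hdim : Module.finrank ℝ V = n + 1)
    (o : Orientation ℝ V (Fin (n+1)))
    (J : (Fin n → W) → W) (ω : W [⋀^Fin (n+1)]→ₗ[ℝ] ℝ)
    (hω : ∀ A : Fin (n+1) → W,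
      (inner ℝ (A 0) (J (fun i : Fin n => A i.succ)) : ℝ) = ω A)
    (φ : V →ₗ[ℝ] W)
    (hMCR : ∀ e : OrthonormalBasis (Fin (n+1)) ℝ V,
      e.toBasis.orientation = o →
      ∀ i : Fin (n+1),
        ((((n+1 : ℝ)) ^ (-(1:ℝ)/2) * Real.sqrt (∑ k, ‖φ (e k)‖ ^ 2)) ^ (n-1)) •
            φ (e i) =
          ((-1 : ℝ)) ^ (n * (n - (i : ℕ))) •
            J (fun j : Fin n => φ (e (i + j.succ)))) :
    ∀ (e : OrthonormalBasis (Fin (n+1)) ℝ V) (v w : V),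
      (inner ℝ (φ v) (φ w) : ℝ) =
        ((∑ k, ‖φ (e k)‖ ^ 2) / (n+1 : ℝ)) * inner ℝ v w := by
  intro e v w
  set f : OrthonormalBasis (Fin (n+1)) ℝ V := o.finOrthonormalBasis n.succ_pos hdim
  have hf : f.toBasis.orientation = o := o.finOrthonormalBasis_orientation n.succ_pos hdim
  set S := ∑ k, ‖φ (f k)‖ ^ 2
  set c := (n+1 : ℝ) ^ (-(1:ℝ)/2) * Real.sqrt S
  have hgram (i j : Fin (n+1)) : c ^ (n-1) * ⟪φ (f i), φ (f j)⟫ =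
      if i = j then (-1) ^ (n * n) * ω (fun k => φ (f k)) else 0 := by
    rw [← real_inner_smul_right, hMCR f hf j, real_inner_smul_right]
    split_ifs with hij
    · rw [hij, inner_cross_rotate_self hω (fun k => φ (f k)) j, ← mul_assoc, ← pow_add,
        ← mul_add, Nat.sub_add_cancel j.is_le]
    · rw [inner_cross_rotate_of_ne hω (fun k => φ (f k)) hij, mul_zero]
  have hdegenerate : c ^ (n-1) = 0 → S = 0 := by
    intro h
    rcases mul_eq_zero.mp (eq_zero_of_pow_eq_zero h) with h | h
    · exact absurd h (Real.rpow_pos_of_pos (by positivity : (0:ℝ) < n + 1) _).ne'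
    · exact (Real.sqrt_eq_zero (Finset.sum_nonneg fun k _ => sq_nonneg _)).mp h
  have hconf := inner_map_map_of_orthonormalBasis f fun i j => by
    rw [inner_eq_of_mul_inner_eq_ite hgram hdegenerate, orthonormal_iff_ite.mp f.orthonormal]
  rw [sum_norm_sq_map_of_inner_map_map hconf e, hconf, Fintype.card_fin]
  push_cast
  field_simp

/-- pointwise form: a multiholomorphic map is weakly conformal.
At a point, the differential `φ = du_x : V → W` satisfies the linear
multi-CR equation (expressed on orthonormal oriented bases of `V`, with the
target vector cross product `J`), and then the pullback metric satisfies
`u*g = (n+1)^{-1}|du|² g_X`, i.e. `⟨φv, φw⟩ = (n+1)^{-1}‖φ‖²_HS ⟨v,w⟩`. -/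
theorem stmt_8 {V W : Type*}
    [NormedAddCommGroup V] [InnerProductSpace ℝ V] [FiniteDimensional ℝ V]
    [NormedAddCommGroup W] [InnerProductSpace ℝ W]
    (n : ℕ) (hdim : Module.finrank ℝ V = n + 1)
    (o : Orientation ℝ V (Fin (n+1)))
    (J : (Fin n → W) → W) (ω : W [⋀^Fin (n+1)]→ₗ[ℝ] ℝ)
    (hω : ∀ A : Fin (n+1) → W,
      (inner ℝ (A 0) (J (fun i : Fin n => A i.succ)) : ℝ) = ω A)
    (hcomass : ∀ A : Fin n → W,
      ‖J A‖ ^ 2 = (Matrix.of fun i j : Fin n => (inner ℝ (A i) (A j) : ℝ)).det)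
    (φ : V →ₗ[ℝ] W)
    (hMCR : ∀ e : OrthonormalBasis (Fin (n+1)) ℝ V,
      e.toBasis.orientation = o →
      ∀ i : Fin (n+1),
        ((((n+1 : ℝ)) ^ (-(1:ℝ)/2) * Real.sqrt (∑ k, ‖φ (e k)‖ ^ 2)) ^ (n-1)) •
            φ (e i) =
          ((-1 : ℝ)) ^ (n * (n - (i : ℕ))) •
            J (fun j : Fin n => φ (e (i + j.succ)))) :
    ∀ (e : OrthonormalBasis (Fin (n+1)) ℝ V) (v w : V),
      (inner ℝ (φ v) (φ w) : ℝ) =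
        ((∑ k, ‖φ (e k)‖ ^ 2) / (n+1 : ℝ)) * inner ℝ v w :=
  stmt_8_general n hdim o J ω hω φ hMCR
end

section
/- For a multiholomorphic map u : X³ → M⁷ into a G₂-manifold (ðu = 0), the function F(x) := (√3/|du|)·u*ω([X]) (evaluation of the pulled-back associative 3-form on the unit volume trivector, scaled by |du|⁻¹) satisfies F = (1/3)|du|² and u*g = F·h. Pointwise linear version: if φ : V³ → W⁷ is a linear solution of the multi-CR equation with n = 2, then ω(φ(e₀)∧φ(e₁)∧φ(e₂)) = 3^{-3/2} ‖φ‖_{HS}³ and φ^Tφ = (‖φ‖_{HS}²/3)·I_V. -/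
/-!
Write `aᵢ = φ eᵢ` and `c = 3^{-1/2}‖φ‖_HS`, so that `3c² = Σ |aᵢ|²`. Taking norms in
`c aᵢ = aᵢ₊₁ × aᵢ₊₂` and using the Lagrange identity `|x × y|² = |x|²|y|² - ⟨x,y⟩²` gives
`c²|aᵢ|² = |aᵢ₊₁|²|aᵢ₊₂|² - ⟨aᵢ₊₁,aᵢ₊₂⟩²`. Summing over `i`, the sum of the squared inner products
equals `Σ_{i<j} |aᵢ|²|aⱼ|² - 3c⁴`, which is `≤ 0` by the QM–AM inequality. Hence the `aᵢ` are
orthogonal of common length `c`, i.e. `φᵀφ = c²·I`, and `ω(a₀,a₁,a₂) = ⟨c a₂, a₂⟩ = c³`.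
-/

noncomputable section

/-- The octonions via the Cayley–Dickson construction `𝕆 = ℍ ⊕ ℍ`. -/
abbrev Octo : Type := Quaternion ℝ × Quaternion ℝ

/-- Octonion multiplication `(a,b)(c,d) = (ac − d̄b, da + bc̄)`. -/
def omul (x y : Octo) : Octo :=
  (x.1 * y.1 - star y.2 * x.2, y.2 * x.1 + x.2 * star y.1)

/-- Real part of an octonion. -/
def oRe (x : Octo) : ℝ := x.1.re

/-- Imaginary part of an octonion. -/
def oIm (x : Octo) : Octo := (x.1.im, x.2)

/-- Octonion conjugation `x̄ = Re x − Im x`. -/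
def oconj (x : Octo) : Octo := (star x.1, -x.2)

/-- The Euclidean inner product `g(A,B) = Re(A·B̄)`. -/
def og (x y : Octo) : ℝ := oRe (omul x (oconj y))

/-- The cross product on imaginary octonions, `J(A,B) = Im(A·B)`. -/
def oJ (x y : Octo) : Octo := oIm (omul x y)

theorem og_eq (x y : Octo) : og x y =
    x.1.re * y.1.re + x.1.imI * y.1.imI + x.1.imJ * y.1.imJ + x.1.imK * y.1.imK +
    x.2.re * y.2.re + x.2.imI * y.2.imI + x.2.imJ * y.2.imJ + x.2.imK * y.2.imK := by
  simp only [og, omul, oconj, oRe, Quaternion.re_sub, Quaternion.re_mul, Quaternion.re_star,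
    Quaternion.imI_star, Quaternion.imJ_star, Quaternion.imK_star, Quaternion.re_neg,
    Quaternion.imI_neg, Quaternion.imJ_neg, Quaternion.imK_neg]
  ring

theorem og_comm (x y : Octo) : og x y = og y x := by
  simp only [og_eq]; ring

theorem og_self_nonneg (x : Octo) : 0 ≤ og x x := by
  rw [og_eq]; simp only [← sq]; positivity

theorem og_add_left (x x' y : Octo) : og (x + x') y = og x y + og x' y := by
  simp only [og_eq, Prod.fst_add, Prod.snd_add, Quaternion.re_add, Quaternion.imI_add,
    Quaternion.imJ_add, Quaternion.imK_add]; ring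

theorem og_smul_left (c : ℝ) (x y : Octo) : og (c • x) y = c * og x y := by
  simp only [og_eq, Prod.smul_fst, Prod.smul_snd, Quaternion.re_smul, Quaternion.imI_smul,
    Quaternion.imJ_smul, Quaternion.imK_smul, smul_eq_mul]; ring

theorem og_add_right (x y y' : Octo) : og x (y + y') = og x y + og x y' := by
  rw [og_comm, og_add_left, og_comm y, og_comm y']

theorem og_smul_right (c : ℝ) (x y : Octo) : og x (c • y) = c * og x y := by
  rw [og_comm, og_smul_left, og_comm]

def ogForm : LinearMap.BilinForm ℝ Octo :=
  LinearMap.mk₂ ℝ og og_add_left og_smul_left og_add_right og_smul_right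

theorem og_oJ_self {x y : Octo} (hx : oRe x = 0) (hy : oRe y = 0) :
    og (oJ x y) (oJ x y) = og x x * og y y - og x y ^ 2 := by
  simp only [oRe] at hx hy
  simp only [og_eq, oJ, oIm, omul, Quaternion.re_im, Quaternion.imI_im, Quaternion.imJ_im,
    Quaternion.imK_im, Quaternion.re_sub, Quaternion.imI_sub, Quaternion.imJ_sub,
    Quaternion.imK_sub, Quaternion.re_add, Quaternion.imI_add, Quaternion.imJ_add,
    Quaternion.imK_add, Quaternion.re_mul, Quaternion.imI_mul, Quaternion.imJ_mul,
    Quaternion.imK_mul, Quaternion.re_star, Quaternion.imI_star, Quaternion.imJ_star,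
    Quaternion.imK_star, Quaternion.im_sub, hx, hy]
  ring

theorem eq_of_mul_eq_mul_sub_sq_cyclic {t x y z p q r : ℝ} (hsum : 3 * t = x + y + z)
    (hx : t * x = y * z - p ^ 2) (hy : t * y = z * x - q ^ 2) (hz : t * z = x * y - r ^ 2) :
    x = t ∧ y = t ∧ z = t ∧ p = 0 ∧ q = 0 ∧ r = 0 := by
  have hsos : (x - y) ^ 2 + (y - z) ^ 2 + (z - x) ^ 2 + 6 * (p ^ 2 + q ^ 2 + r ^ 2) = 0 := by
    linear_combination 6 * (hx + hy + hz) - 2 * (x + y + z) * hsum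
  obtain ⟨hxy, hyz, hp, hq, hr⟩ : x - y = 0 ∧ y - z = 0 ∧ p = 0 ∧ q = 0 ∧ r = 0 := by
    refine ⟨?_, ?_, ?_, ?_, ?_⟩ <;> refine (pow_eq_zero_iff two_ne_zero).mp ?_ <;>
      linarith [sq_nonneg (x - y), sq_nonneg (y - z), sq_nonneg (z - x), sq_nonneg p,
        sq_nonneg q, sq_nonneg r]
  exact ⟨by linarith, by linarith, by linarith, hp, hq, hr⟩

theorem og_eq_ite_of_multiCR {a : Fin 3 → Octo} (him : ∀ i, oRe (a i) = 0) {c : ℝ}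
    (hc : c ^ 2 = (∑ k, og (a k) (a k)) / 3) (hMCR : ∀ i, c • a i = oJ (a (i + 1)) (a (i + 2)))
    (i j : Fin 3) : og (a i) (a j) = if i = j then c ^ 2 else 0 := by
  have hlagrange {i j k : Fin 3} (h : c • a i = oJ (a j) (a k)) :
      c ^ 2 * og (a i) (a i) = og (a j) (a j) * og (a k) (a k) - og (a j) (a k) ^ 2 := by
    rw [← og_oJ_self (him _) (him _), ← h, og_smul_left, og_smul_right, sq, mul_assoc]
  rw [Fin.sum_univ_three] at hc
  obtain ⟨h0, h1, h2, h12, h20, h01⟩ := eq_of_mul_eq_mul_sub_sq_cyclic (by linarith)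
    (hlagrange (j := 1) (k := 2) (hMCR 0)) (hlagrange (j := 2) (k := 0) (hMCR 1))
    (hlagrange (j := 0) (k := 1) (hMCR 2))
  fin_cases i <;> fin_cases j <;>
    simp [h0, h1, h2, h12, h20, h01, og_comm (a 1) (a 0), og_comm (a 2) (a 1), og_comm (a 0) (a 2)]

theorem bilinForm_map_eq_mul_inner_of_orthonormalBasis {ι E M : Type*} [Fintype ι] [DecidableEq ι]
    [NormedAddCommGroup E] [InnerProductSpace ℝ E] [AddCommGroup M] [Module ℝ M]
    (B : LinearMap.BilinForm ℝ M) (φ : E →ₗ[ℝ] M) (b : OrthonormalBasis ι ℝ E) (μ : ℝ)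
    (h : ∀ i j, B (φ (b i)) (φ (b j)) = if i = j then μ else 0) (v w : E) :
    B (φ v) (φ w) = μ * inner ℝ v w := by
  have : B.compl₁₂ φ φ = μ • innerₗ E :=
    LinearMap.BilinForm.ext_basis b.toBasis fun i j => by simp [h, b.inner_eq_ite]
  simpa using LinearMap.congr_fun₂ this v w

/-- pointwise linear version for the G₂-case, `n = 2`: if
`φ : V³ → Im 𝕆 ⊂ 𝕆 ≅ ℝ⁷` is a linear solution of the multi-CR equation
`3^{-1/2}‖φ‖_HS φ(eᵢ) = J(φ(e_{i+1}), φ(e_{i+2}))` (indices mod 3, `(eᵢ)`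
the standard oriented orthonormal basis, `J` the G₂ cross product and `ω` the
associative 3-form), then `ω(φe₀ ∧ φe₁ ∧ φe₂) = 3^{-3/2}‖φ‖³_HS` and
`φᵀφ = (‖φ‖²_HS/3)·I`, i.e. `u*g = F·h` with `F = (1/3)|du|²`. -/
theorem stmt_18 (φ : EuclideanSpace ℝ (Fin 3) →ₗ[ℝ] Octo)
    (him : ∀ v, oRe (φ v) = 0)
    (hMCR : ∀ i : Fin 3,
      ((3 : ℝ) ^ (-(1:ℝ)/2) *
          Real.sqrt (∑ k, og (φ (EuclideanSpace.basisFun (Fin 3) ℝ k))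
            (φ (EuclideanSpace.basisFun (Fin 3) ℝ k)))) •
        φ (EuclideanSpace.basisFun (Fin 3) ℝ i) =
      oJ (φ (EuclideanSpace.basisFun (Fin 3) ℝ (i+1)))
        (φ (EuclideanSpace.basisFun (Fin 3) ℝ (i+2)))) :
    og (oJ (φ (EuclideanSpace.basisFun (Fin 3) ℝ 0))
          (φ (EuclideanSpace.basisFun (Fin 3) ℝ 1)))
        (φ (EuclideanSpace.basisFun (Fin 3) ℝ 2)) =
      (3 : ℝ) ^ (-(3:ℝ)/2) *
        (Real.sqrt (∑ k, og (φ (EuclideanSpace.basisFun (Fin 3) ℝ k))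
          (φ (EuclideanSpace.basisFun (Fin 3) ℝ k)))) ^ 3 ∧
    ∀ v w : EuclideanSpace ℝ (Fin 3),
      og (φ v) (φ w) =
        ((∑ k, og (φ (EuclideanSpace.basisFun (Fin 3) ℝ k))
          (φ (EuclideanSpace.basisFun (Fin 3) ℝ k))) / 3) * inner ℝ v w := by
  set e := EuclideanSpace.basisFun (Fin 3) ℝ
  set N := ∑ k, og (φ (e k)) (φ (e k))
  set c := (3 : ℝ) ^ (-(1:ℝ)/2) * Real.sqrt N
  have hc : c ^ 2 = N / 3 := by
    rw [mul_pow, Real.sq_sqrt (Finset.sum_nonneg fun k _ => og_self_nonneg _),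
      ← Real.rpow_natCast, ← Real.rpow_mul (by norm_num)]
    norm_num
    ring
  have hgram := og_eq_ite_of_multiCR (a := fun k => φ (e k)) (fun _ => him _) hc hMCR
  refine ⟨?_, bilinForm_map_eq_mul_inner_of_orthonormalBasis ogForm φ e (N / 3) (hc ▸ hgram)⟩
  have hJ : oJ (φ (e 0)) (φ (e 1)) = c • φ (e 2) := (hMCR 2).symm
  calc og (oJ (φ (e 0)) (φ (e 1))) (φ (e 2)) = c ^ 3 := by
        rw [hJ, og_smul_left, hgram, if_pos rfl]; ring
    _ = _ := by
        rw [mul_pow, ← Real.rpow_natCast, ← Real.rpow_mul (by norm_num)]; norm_num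

end
end
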